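/- arXiv:2102.01047 — 2 statements merged into one kernel-verified Lean document; each statement's English description precedes it below -/
import Mathlib

section
/- Let F : [0,1] → ℝ be continuously differentiable with F(0) = F(1) = 0, F(w) > 0 for all w ∈ (0,1), F'(0) = 1, F(w) ≤ w for all w ∈ (0,1], F'(1) < 0, and limsup_{w↓0} (1 - F'(w))/w < ∞. Then there exists n ∈ ℕ such that G_n(x) := ((1-x)/n)·(1-(1-x)^n) ≤ F(x) for all x ∈ [0,1]. -/
/-!
Near `0`, the limsup condition gives `F' w ≥ 1 - C w`, hence `F x ≥ x - C x² / 2`, while the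
cubic Bonferroni bound `1 - (1 - x)ⁿ ≤ n x - n(n-1)/2 x² + n(n-1)(n-2)/6 x³` shows that
`G_n x ≤ x - (n - 1) x² / 6` for `x ≤ 2 / n`, and `G_n ≤ 1 / n ≤ x / 2` beyond. Near `1`,
`F' 1 < 0` gives `F x ≥ c (1 - x)` while `G_n x ≤ (1 - x) / n`. In between, `F` is bounded below
by a positive constant on a compact interval and `G_n ≤ 1 / n`. So any large `n` works.
-/

open Set Filter Topology

/-- The nonlinearity `G_n` of branching Brownian motion with offspring law `p₁ = 1 - 1/n`,
`pₙ₊₁ = 1/n`. -/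
noncomputable def branchingNonlinearity (n : ℕ) (x : ℝ) : ℝ :=
  (1 - x) / n * (1 - (1 - x) ^ n)

theorem cubic_le_one_sub_pow (n : ℕ) {x : ℝ} (hx : x ≤ 1) :
    1 - n * x + n * (n - 1) / 2 * x ^ 2 - n * (n - 1) * (n - 2) / 6 * x ^ 3 ≤ (1 - x) ^ n := by
  induction n with
  | zero => norm_num
  | succ n ih =>
    have hcoef : (0 : ℝ) ≤ n * (n - 1) * (n - 2) / 6 * x ^ 4 := by
      refine mul_nonneg (div_nonneg ?_ (by norm_num)) (by positivity)
      rcases n with _ | _ | n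
      · norm_num
      · norm_num
      · push_cast; ring_nf; positivity
    have hstep := mul_le_mul_of_nonneg_left ih (sub_nonneg.2 hx)
    have hexpand :
        (1 - x) * (1 - n * x + n * (n - 1) / 2 * x ^ 2 - n * (n - 1) * (n - 2) / 6 * x ^ 3)
        = 1 - (n + 1) * x + (n + 1) * n / 2 * x ^ 2 - (n + 1) * n * (n - 1) / 6 * x ^ 3
          + n * (n - 1) * (n - 2) / 6 * x ^ 4 := by ring
    push_cast
    rw [pow_succ' (1 - x) n]
    linarith

theorem branchingNonlinearity_le_div (n : ℕ) {x : ℝ} (hx : x ≤ 1) :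
    branchingNonlinearity n x ≤ (1 - x) / n :=
  mul_le_of_le_one_right (div_nonneg (sub_nonneg.2 hx) n.cast_nonneg)
    (sub_le_self _ (pow_nonneg (sub_nonneg.2 hx) n))

theorem branchingNonlinearity_le_of_le_two_div {n : ℕ} (hn : 1 ≤ n) {x : ℝ}
    (hx : x ∈ Icc (0 : ℝ) 1) (hxn : x ≤ 2 / n) :
    branchingNonlinearity n x ≤ x - (n - 1) / 6 * x ^ 2 := by
  have hn' : (1 : ℝ) ≤ n := by exact_mod_cast hn
  have hnx : n * x ≤ 2 := by rwa [le_div_iff₀ (by linarith), mul_comm] at hxn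
  calc branchingNonlinearity n x ≤ 1 / n * (1 - (1 - x) ^ n) := by
        refine mul_le_mul_of_nonneg_right ?_ (sub_nonneg.2 (pow_le_one₀ ?_ ?_))
        · exact div_le_div_of_nonneg_right (by linarith [hx.1]) n.cast_nonneg
        all_goals linarith [hx.1, hx.2]
    _ ≤ 1 / n * (n * x - n * (n - 1) / 2 * x ^ 2 + n * (n - 1) * (n - 2) / 6 * x ^ 3) := by
        gcongr
        linarith [cubic_le_one_sub_pow n hx.2]
    _ = x - (n - 1) / 2 * x ^ 2 + (n - 1) * (n - 2) / 6 * x ^ 3 := by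
        field_simp
    _ ≤ x - (n - 1) / 6 * x ^ 2 := by
        nlinarith [mul_nonneg (mul_nonneg (sub_nonneg.2 hn') (sq_nonneg x))
          (by nlinarith [hx.1] : (0 : ℝ) ≤ 2 - (n - 2) * x)]

theorem branchingNonlinearity_le_quadratic {n : ℕ} {C x : ℝ} (hC : 0 ≤ C)
    (hn : 3 * C + 1 ≤ n) (hx : x ∈ Icc (0 : ℝ) 1) (hCx : C * x ≤ 1) :
    branchingNonlinearity n x ≤ x - C / 2 * x ^ 2 := by
  have hn' : (0 : ℝ) < n := by linarith
  rcases le_or_gt x (2 / n) with hxn | hxn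
  · calc branchingNonlinearity n x ≤ x - (n - 1) / 6 * x ^ 2 :=
          branchingNonlinearity_le_of_le_two_div (by exact_mod_cast (by linarith : (1 : ℝ) ≤ n))
            hx hxn
      _ ≤ x - C / 2 * x ^ 2 := by nlinarith [sq_nonneg x]
  · calc branchingNonlinearity n x ≤ (1 - x) / n := branchingNonlinearity_le_div n hx.2
      _ ≤ 1 / n := div_le_div_of_nonneg_right (by linarith [hx.1]) hn'.le
      _ ≤ x / 2 := by rw [div_lt_iff₀ hn'] at hxn; rw [div_le_div_iff₀ hn' two_pos]; linarith
      _ ≤ x - C / 2 * x ^ 2 := by nlinarith [mul_le_mul_of_nonneg_right hCx hx.1]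

theorem monotoneOn_sub_of_hasDerivWithinAt_le {f g f' g' : ℝ → ℝ} {a b : ℝ}
    (hf : ∀ x ∈ Icc a b, HasDerivWithinAt f (f' x) (Icc a b) x)
    (hg : ∀ x ∈ Icc a b, HasDerivWithinAt g (g' x) (Icc a b) x)
    (hle : ∀ x ∈ Ioo a b, g' x ≤ f' x) :
    MonotoneOn (fun x => f x - g x) (Icc a b) := by
  refine monotoneOn_of_hasDerivWithinAt_nonneg (convex_Icc a b) (f' := fun x => f' x - g' x)
    (fun x hx => ((hf x hx).sub (hg x hx)).continuousWithinAt) (fun x hx => ?_) (fun x hx => ?_)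
  · rw [interior_Icc] at hx ⊢
    exact ((hf x (Ioo_subset_Icc_self hx)).sub (hg x (Ioo_subset_Icc_self hx))).mono
      Ioo_subset_Icc_self
  · rw [interior_Icc] at hx
    exact sub_nonneg.2 (hle x hx)

theorem sub_mul_sq_le_of_one_sub_mul_le_deriv {F F' : ℝ → ℝ} {C δ : ℝ}
    (hderiv : ∀ x ∈ Icc 0 δ, HasDerivWithinAt F (F' x) (Icc 0 δ) x) (hF0 : F 0 = 0)
    (hF' : ∀ w ∈ Ioo 0 δ, 1 - C * w ≤ F' w) :
    ∀ x ∈ Icc 0 δ, x - C / 2 * x ^ 2 ≤ F x := by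
  have hquad : ∀ x ∈ Icc 0 δ, HasDerivWithinAt (fun x => x - C / 2 * x ^ 2) (1 - C * x)
      (Icc 0 δ) x := fun x _ =>
    (((hasDerivAt_id' x).sub ((hasDerivAt_pow 2 x).const_mul (C / 2))).hasDerivWithinAt).congr_deriv
      (by norm_num; ring)
  intro x hx
  have := monotoneOn_sub_of_hasDerivWithinAt_le hderiv hquad hF'
    ⟨le_rfl, hx.1.trans hx.2⟩ hx hx.1
  simp only [hF0] at this
  linarith

theorem mul_one_sub_le_of_deriv_le {F F' : ℝ → ℝ} {b c : ℝ}
    (hderiv : ∀ x ∈ Icc b 1, HasDerivWithinAt F (F' x) (Icc b 1) x) (hF1 : F 1 = 0)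
    (hF' : ∀ w ∈ Ioo b 1, F' w ≤ -c) :
    ∀ x ∈ Icc b 1, c * (1 - x) ≤ F x := by
  have hlin : ∀ x ∈ Icc b 1, HasDerivWithinAt (fun x => c * (1 - x)) (-c) (Icc b 1) x :=
    fun x _ => by simpa using ((hasDerivAt_id x).const_sub 1).const_mul c |>.hasDerivWithinAt
  intro x hx
  have := monotoneOn_sub_of_hasDerivWithinAt_le hlin hderiv hF'
    hx ⟨hx.1.trans hx.2, le_rfl⟩ hx.2
  simp only [hF1] at this
  linarith

theorem exists_one_sub_mul_le_of_eventually_div_le {F' : ℝ → ℝ}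
    (h : ∃ C : ℝ, ∀ᶠ w in 𝓝[>] 0, (1 - F' w) / w ≤ C) :
    ∃ C > 0, ∃ δ ∈ Ioc (0 : ℝ) 1, ∀ w ∈ Ioo 0 δ, 1 - C * w ≤ F' w := by
  obtain ⟨C, hC⟩ := h
  have hev : ∀ᶠ w in 𝓝[>] 0, 1 - max C 1 * w ≤ F' w := by
    filter_upwards [hC, self_mem_nhdsWithin] with w hw (hw0 : 0 < w)
    rw [div_le_iff₀ hw0] at hw
    nlinarith [le_max_left C 1]
  obtain ⟨δ, hδ, hsub⟩ := (mem_nhdsGT_iff_exists_mem_Ioc_Ioo_subset one_pos).1 hev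
  exact ⟨max C 1, by positivity, δ, hδ, hsub⟩

theorem exists_Icc_forall_lt_of_continuousWithinAt {f : ℝ → ℝ} {a b y : ℝ} (hab : a < b)
    (hf : ContinuousWithinAt f (Icc a b) b) (hy : f b < y) :
    ∃ l ∈ Ico a b, ∀ w ∈ Icc l b, f w < y := by
  have hev : ∀ᶠ w in 𝓝[≤] b, f w < y := by
    rw [← nhdsWithin_Icc_eq_nhdsLE hab]
    exact hf.eventually_lt_const hy
  obtain ⟨l, hlb, hsub⟩ := mem_nhdsLE_iff_exists_Icc_subset.1 hev
  exact ⟨max l a, ⟨le_max_right _ _, max_lt hlb hab⟩,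
    fun w hw => hsub ⟨(le_max_left _ _).trans hw.1, hw.2⟩⟩

theorem exists_branchingNonlinearity_le {F : ℝ → ℝ} {C a b m c : ℝ} (hC : 0 ≤ C)
    (haC : C * a ≤ 1) (hm : 0 < m) (hc : 0 < c)
    (hnear0 : ∀ x ∈ Icc 0 a, x - C / 2 * x ^ 2 ≤ F x) (hmid : ∀ x ∈ Icc a b, m ≤ F x)
    (hnear1 : ∀ x ∈ Icc b 1, c * (1 - x) ≤ F x) :
    ∃ n : ℕ, 1 ≤ n ∧ ∀ x ∈ Icc (0 : ℝ) 1, branchingNonlinearity n x ≤ F x := by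
  obtain ⟨n, hn⟩ := exists_nat_ge (max (3 * C + 1) (max (1 / m) (1 / c)))
  simp only [max_le_iff] at hn
  obtain ⟨hnC, hnm, hnc⟩ := hn
  have hn0 : (0 : ℝ) < n := by linarith
  refine ⟨n, by exact_mod_cast (by linarith : (1 : ℝ) ≤ n), fun x hx => ?_⟩
  rcases le_or_gt x a with hxa | hxa
  · have hCx : C * x ≤ 1 := (mul_le_mul_of_nonneg_left hxa hC).trans haC
    exact (branchingNonlinearity_le_quadratic hC hnC hx hCx).trans (hnear0 x ⟨hx.1, hxa⟩)
  rcases le_or_gt x b with hxb | hxb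
  · calc branchingNonlinearity n x ≤ (1 - x) / n := branchingNonlinearity_le_div n hx.2
      _ ≤ 1 / n := div_le_div_of_nonneg_right (by linarith [hx.1]) hn0.le
      _ ≤ m := (one_div_le hm hn0).mp hnm
      _ ≤ F x := hmid x ⟨hxa.le, hxb⟩
  · calc branchingNonlinearity n x ≤ (1 - x) / n := branchingNonlinearity_le_div n hx.2
      _ = (1 - x) * (1 / n) := by ring
      _ ≤ (1 - x) * c :=
        mul_le_mul_of_nonneg_left ((one_div_le hc hn0).mp hnc) (by linarith [hx.2])
      _ = c * (1 - x) := mul_comm _ _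
      _ ≤ F x := hnear1 x ⟨hxb.le, hx.2⟩

theorem stmt4_general (F F' : ℝ → ℝ)
    (hderiv : ∀ x ∈ Set.Icc (0:ℝ) 1, HasDerivWithinAt F (F' x) (Set.Icc 0 1) x)
    (hcont : ContinuousOn F' (Set.Icc 0 1))
    (hF0 : F 0 = 0) (hF1 : F 1 = 0)
    (hFpos : ∀ w ∈ Set.Ioo (0:ℝ) 1, 0 < F w)
    (hF'1 : F' 1 < 0)
    (hlimsup : ∃ C : ℝ, ∀ᶠ w in nhdsWithin 0 (Set.Ioi 0), (1 - F' w)/w ≤ C) :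
    ∃ n : ℕ, 1 ≤ n ∧ ∀ x ∈ Set.Icc (0:ℝ) 1, ((1 - x)/(n:ℝ)) * (1 - (1 - x)^n) ≤ F x := by
  have hderivOn : ∀ {s}, s ⊆ Icc (0 : ℝ) 1 → ∀ x ∈ s, HasDerivWithinAt F (F' x) s x :=
    fun hs x hx => (hderiv x (hs hx)).mono hs
  obtain ⟨C, hC, δ, hδ, hnear0⟩ := exists_one_sub_mul_le_of_eventually_div_le hlimsup
  obtain ⟨b, hb, hnear1⟩ := exists_Icc_forall_lt_of_continuousWithinAt one_pos
    (hcont 1 ⟨zero_le_one, le_rfl⟩) (by linarith : F' 1 < -(-F' 1 / 2))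
  set a := min δ C⁻¹
  have ha : 0 < a := lt_min hδ.1 (inv_pos.2 hC)
  have haC : C * a ≤ 1 :=
    (mul_le_mul_of_nonneg_left (min_le_right _ _) hC.le).trans (mul_inv_cancel₀ hC.ne').le
  have hab : Icc a b ⊆ Icc 0 1 := Icc_subset_Icc ha.le hb.2.le
  obtain ⟨m, hm, hmid⟩ := isCompact_Icc.exists_forall_le'
    (fun x hx => (hderivOn hab x hx).continuousWithinAt)
    (fun x hx => hFpos x ⟨ha.trans_le hx.1, hx.2.trans_lt hb.2⟩)
  have hquad := sub_mul_sq_le_of_one_sub_mul_le_deriv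
    (hderivOn (Icc_subset_Icc le_rfl hδ.2)) hF0 hnear0
  have hlin := mul_one_sub_le_of_deriv_le (hderivOn (Icc_subset_Icc hb.1 le_rfl)) hF1
    fun w hw => (hnear1 w (Ioo_subset_Icc_self hw)).le
  exact exists_branchingNonlinearity_le hC.le haC hm (by linarith)
    (fun x hx => hquad x ⟨hx.1, hx.2.trans (min_le_left _ _)⟩) hmid hlin

/-- for any nonlinearity F satisfying the standard conditions (SC),
there is some n with G_n ≤ F on [0,1]. -/
theorem stmt4 (F F' : ℝ → ℝ)
    (hderiv : ∀ x ∈ Set.Icc (0:ℝ) 1, HasDerivWithinAt F (F' x) (Set.Icc 0 1) x)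
    (hcont : ContinuousOn F' (Set.Icc 0 1))
    (hF0 : F 0 = 0) (hF1 : F 1 = 0)
    (hFpos : ∀ w ∈ Set.Ioo (0:ℝ) 1, 0 < F w)
    (hF'0 : F' 0 = 1)
    (hFle : ∀ w ∈ Set.Ioc (0:ℝ) 1, F w ≤ w)
    (hF'1 : F' 1 < 0)
    (hlimsup : ∃ C : ℝ, ∀ᶠ w in nhdsWithin 0 (Set.Ioi 0), (1 - F' w)/w ≤ C) :
    ∃ n : ℕ, 1 ≤ n ∧ ∀ x ∈ Set.Icc (0:ℝ) 1, ((1 - x)/(n:ℝ)) * (1 - (1 - x)^n) ≤ F x :=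
  stmt4_general F F' hderiv hcont hF0 hF1 hFpos hF'1 hlimsup
end

section
/- Let ξ : ℝ → [0, ∞) be measurable and bounded, let (B_t) be a one-dimensional Brownian motion with law P_x started at x, and define u(t, x) := E_x[exp(∫_0^t ξ(B_r) dr) · 1_{B_t ≤ 0}]. Then for all x ∈ ℝ and all 0 ≤ s ≤ t one has u(s, x) ≤ 2·u(t, x). -/
/-!
Write `I_s(ω) = ∫₀ˢ ξ(ω r) dr`. As `ξ ≥ 0`, `I_s ≤ I_t`; and a path with `ω s ≤ 0` and
`ω t - ω s ≤ 0` ends below `0` at time `t`. Hence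
`u(t, x) ≥ E_x[e^{I_s}; ω s ≤ 0, ω t - ω s ≤ 0] = u(s, x) · P_x(ω t - ω s ≤ 0)`,
the factorisation being the Markov property at time `s`: the increment `ω t - ω s` is independent
of the path on `[0, s]` (from independence of increments on finite grids, passing to the directed
supremum of σ-algebras). The increment is a centred Gaussian, so its probability of being
`≤ 0` is at least `1/2`.
-/

open MeasureTheory ProbabilityTheory

/-- The family of laws of a one-dimensional Brownian motion started at each point
`x ∈ ℝ`, realized on the space of continuous paths: each `P x` is a probability
measure starting at `x`, with Gaussian increments of variance `t - s` and
independent increments. -/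
def IsBrownianMotion (P : ℝ → Measure {f : ℝ → ℝ // Continuous f}) : Prop :=
  (∀ x, IsProbabilityMeasure (P x)) ∧
  (∀ x, ∀ᵐ ω ∂ P x, ω.1 0 = x) ∧
  (∀ x, ∀ s t : ℝ, 0 ≤ s → s ≤ t →
      Measure.map (fun ω : {f : ℝ → ℝ // Continuous f} => ω.1 t - ω.1 s)
          (P x)
        = gaussianReal 0 (Real.toNNReal (t - s))) ∧
  (∀ x : ℝ, ∀ n : ℕ, ∀ ts : ℕ → ℝ, Monotone ts → 0 ≤ ts 0 →
      iIndepFun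
        (fun (i : Fin n) (ω : {f : ℝ → ℝ // Continuous f}) =>
          ω.1 (ts (i.1 + 1)) - ω.1 (ts i.1)) (P x))

namespace ProbabilityTheory

variable {Ω : Type*} {m₁ m₂ mΩ : MeasurableSpace Ω} {μ : Measure Ω}

theorem Indep.setIntegral_eq_measureReal_smul_integral {E : Type*} [NormedAddCommGroup E]
    [NormedSpace ℝ E] [CompleteSpace E] [IsFiniteMeasure μ] {f : Ω → E} {B : Set Ω}
    (hle₁ : m₁ ≤ mΩ) (hle₂ : m₂ ≤ mΩ) (hindep : Indep m₁ m₂ μ)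
    (hf : StronglyMeasurable[m₁] f) (hfi : Integrable f μ) (hB : MeasurableSet[m₂] B) :
    ∫ ω in B, f ω ∂μ = μ.real B • ∫ ω, f ω ∂μ := by
  rw [← setIntegral_condExp hle₂ hfi hB, setIntegral_congr_ae (hle₂ B hB)
    ((condExp_indep_eq hle₁ hle₂ hf hindep).mono fun _ h _ => h), setIntegral_const]

theorem iIndepFun.indepFun_partialSum_last {β : Type*} [AddCommMonoid β] [MeasurableSpace β]
    [MeasurableAdd₂ β] [IsProbabilityMeasure μ] {n : ℕ} {X : Fin (n + 1) → Ω → β}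
    (hX : iIndepFun X μ) (hXm : ∀ i, Measurable (X i)) :
    IndepFun (fun ω (k : Fin (n + 1)) => ∑ j ∈ Finset.Iio k, X j ω) (X (Fin.last n)) μ := by
  classical
  set S := Finset.Iio (Fin.last n)
  have hST : Disjoint S {Fin.last n} := by simp [S]
  have hlast : Measurable fun v : ({Fin.last n} : Finset (Fin (n + 1))) → β =>
      v ⟨Fin.last n, Finset.mem_singleton_self _⟩ := measurable_pi_apply _
  have h : IndepFun (fun ω (k : Fin (n + 1)) => ∑ j : S, if j.1 < k then X j ω else 0)
      (X (Fin.last n)) μ := (hX.indepFun_finset S {Fin.last n} hST hXm).comp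
    (φ := fun v (k : Fin (n + 1)) => ∑ j : S, if j.1 < k then v j else 0)
    (measurable_pi_lambda _ fun k => Finset.measurable_sum _ fun j _ => by
      split_ifs
      exacts [measurable_pi_apply j, measurable_const])
    hlast
  convert h using 3 with ω k
  rw [Finset.sum_coe_sort S (fun j => if j < k then X j ω else 0), ← Finset.sum_filter]
  congr 1
  ext j
  simp only [S, Finset.mem_filter, Finset.mem_Iio]
  exact ⟨fun h => ⟨h.trans_le (Fin.le_last k), h⟩, And.right⟩

theorem half_le_measureReal_Iic_zero {μ : Measure ℝ} [IsProbabilityMeasure μ]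
    (hμ : μ.map (fun x => -x) = μ) : 1 / 2 ≤ μ.real (Set.Iic 0) := by
  have hsymm : μ.real (Set.Ici 0) = μ.real (Set.Iic 0) := by
    conv_lhs => rw [← hμ]
    rw [map_measureReal_apply measurable_neg measurableSet_Ici]
    congr 1
    ext x
    simp
  have hcover : μ.real Set.univ ≤ μ.real (Set.Iic 0) + μ.real (Set.Ici 0) := by
    rw [← Set.Iic_union_Ici]
    exact measureReal_union_le _ _
  rw [probReal_univ] at hcover
  linarith

end ProbabilityTheory

theorem measurable_intervalIntegral_comp {Ω : Type*} {m : MeasurableSpace Ω} {Y : ℝ → Ω → ℝ}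
    {ξ : ℝ → ℝ} {s : ℝ} (hs : 0 ≤ s) (hY : ∀ ω, Continuous fun r => Y r ω)
    (hYm : ∀ r ∈ Set.Icc 0 s, Measurable[m] (Y r)) (hξ : Measurable ξ) :
    Measurable[m] fun ω => ∫ r in 0..s, ξ (Y r ω) := by
  let Z : ℝ → Ω → ℝ := fun r => Y (Set.projIcc 0 s hs r)
  have hZ : Measurable[m.prod inferInstance] fun p : Ω × ℝ => ξ (Z p.2 p.1) :=
    hξ.comp ((measurable_uncurry_of_continuous_of_measurable
      (fun ω => (hY ω).comp (continuous_subtype_val.comp continuous_projIcc))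
      (fun r => hYm _ (Set.projIcc 0 s hs r).2)).comp measurable_swap)
  have hZ_eq : ∀ ω, ∫ r in 0..s, ξ (Y r ω) = ∫ r in Set.Ioc 0 s, ξ (Z r ω) := fun ω => by
    rw [intervalIntegral.integral_of_le hs]
    refine setIntegral_congr_fun measurableSet_Ioc fun r hr => ?_
    simp only [Z, Set.projIcc_of_mem hs (Set.Ioc_subset_Icc_self hr)]
  simp_rw [hZ_eq]
  exact hZ.stronglyMeasurable.integral_prod_right'.measurable

theorem Finset.exists_monotone_grid {α : Type*} [LinearOrder α] {a s t : α} (has : a ≤ s)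
    (hst : s ≤ t) (F : Finset α) (hF : ∀ r ∈ F, r ∈ Set.Icc a s) :
    ∃ (n : ℕ) (ts : ℕ → α), Monotone ts ∧ ts 0 = a ∧ ts n = s ∧ ts (n + 1) = t ∧
      ∀ r ∈ F, ∃ k ≤ n, ts k = r := by
  classical
  set G := insert a (insert s F)
  have hG : ∀ r ∈ G, r ∈ Set.Icc a s := by
    simp only [G, Finset.mem_insert]
    rintro r (rfl | rfl | hr)
    exacts [⟨le_rfl, has⟩, ⟨has, le_rfl⟩, hF r hr]
  have haG : a ∈ G := Finset.mem_insert_self _ _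
  have hsG : s ∈ G := Finset.mem_insert_of_mem (Finset.mem_insert_self _ _)
  set N := G.card
  have hN : 0 < N := Finset.card_pos.2 ⟨a, haG⟩
  set e := G.orderEmbOfFin rfl
  have he : ∀ i, e i ∈ G := fun i => by
    rw [← Finset.mem_coe, ← Finset.range_orderEmbOfFin G rfl]
    exact Set.mem_range_self i
  let ts : ℕ → α := fun i => if h : i < N then e ⟨i, h⟩ else t
  refine ⟨N - 1, ts, ?mono, ?first, ?last, ?final, ?grid⟩
  case mono =>
    intro i j hij
    simp only [ts]
    split_ifs with hi hj hj
    · exact e.monotone (Fin.mk_le_mk.2 hij)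
    · exact ((hG _ (he _)).2).trans hst
    · omega
    · exact le_rfl
  case first =>
    simp only [ts, dif_pos hN, e, Finset.orderEmbOfFin_zero rfl hN]
    exact le_antisymm (G.min'_le a haG) (G.le_min' _ a fun r hr => (hG r hr).1)
  case last =>
    simp only [ts, dif_pos (Nat.sub_lt hN one_pos), e]
    rw [Finset.orderEmbOfFin_last rfl hN]
    exact le_antisymm (G.max'_le _ s fun r hr => (hG r hr).2) (G.le_max' s hsG)
  case final =>
    simp only [ts, Nat.sub_add_cancel hN, lt_irrefl, dite_false]
  case grid =>
    intro r hr
    have : r ∈ Set.range e := by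
      rw [Finset.range_orderEmbOfFin]
      exact Finset.mem_insert_of_mem (Finset.mem_insert_of_mem hr)
    obtain ⟨k, rfl⟩ := this
    exact ⟨k, by omega, dif_pos k.2⟩

local notation "𝒲" => {f : ℝ → ℝ // Continuous f}

theorem measurable_path_eval (r : ℝ) : Measurable fun ω : 𝒲 => ω.1 r :=
  (measurable_pi_apply r).comp measurable_subtype_coe

abbrev pathPast (s : ℝ) : MeasurableSpace 𝒲 :=
  ⨆ r : Set.Icc (0 : ℝ) s, MeasurableSpace.comap (fun ω : 𝒲 => ω.1 r) inferInstance

theorem pathPast_le (s : ℝ) : pathPast s ≤ Subtype.instMeasurableSpace :=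
  iSup_le fun r => (measurable_path_eval r).comap_le

theorem measurable_pathPast_eval {r s : ℝ} (hr : r ∈ Set.Icc 0 s) :
    Measurable[pathPast s] fun ω : 𝒲 => ω.1 r :=
  measurable_iff_comap_le.2 (le_iSup_of_le (⟨r, hr⟩ : Set.Icc (0 : ℝ) s) le_rfl)

section

variable {ξ : ℝ → ℝ} {K : ℝ}

theorem integrable_exp_intervalIntegral_path {μ : Measure 𝒲} [IsFiniteMeasure μ]
    (hξm : Measurable ξ) (hξK : ∀ z, ‖ξ z‖ ≤ K) {t : ℝ} (ht : 0 ≤ t) :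
    Integrable (fun ω : 𝒲 => Real.exp (∫ r in (0 : ℝ)..t, ξ (ω.1 r))) μ := by
  refine Integrable.of_bound (Real.measurable_exp.comp (measurable_intervalIntegral_comp ht
    (fun ω => ω.2) (fun r _ => measurable_path_eval r) hξm)).aestronglyMeasurable
    (Real.exp (K * |t - 0|)) (ae_of_all _ fun ω => ?_)
  rw [Real.norm_of_nonneg (Real.exp_pos _).le, Real.exp_le_exp]
  exact (le_abs_self _).trans
    (intervalIntegral.norm_integral_le_of_norm_le_const fun r _ => hξK (ω.1 r))

theorem setIntegral_exp_intervalIntegral_path_le {μ : Measure 𝒲} [IsFiniteMeasure μ]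
    (hξm : Measurable ξ) (hξ0 : ∀ z, 0 ≤ ξ z) (hξK : ∀ z, ‖ξ z‖ ≤ K) {s t : ℝ} (hs : 0 ≤ s)
    (hst : s ≤ t) :
    ∫ ω in {ω : 𝒲 | ω.1 t - ω.1 s ≤ 0} ∩ {ω | ω.1 s ≤ 0},
        Real.exp (∫ r in (0 : ℝ)..s, ξ (ω.1 r)) ∂μ ≤
      ∫ ω in {ω : 𝒲 | ω.1 t ≤ 0}, Real.exp (∫ r in (0 : ℝ)..t, ξ (ω.1 r)) ∂μ := by
  have hint_t := integrable_exp_intervalIntegral_path (μ := μ) hξm hξK (hs.trans hst)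
  have hmono (ω : 𝒲) : ∫ r in (0 : ℝ)..s, ξ (ω.1 r) ≤ ∫ r in (0 : ℝ)..t, ξ (ω.1 r) :=
    intervalIntegral.integral_mono_interval le_rfl hs hst (ae_of_all _ fun _ => hξ0 _)
      (intervalIntegrable_const.mono_fun' (hξm.comp ω.2.measurable).aestronglyMeasurable
        (ae_of_all _ fun _ => hξK _))
  calc _ ≤ ∫ ω in {ω : 𝒲 | ω.1 t - ω.1 s ≤ 0} ∩ {ω | ω.1 s ≤ 0},
          Real.exp (∫ r in (0 : ℝ)..t, ξ (ω.1 r)) ∂μ :=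
        setIntegral_mono (integrable_exp_intervalIntegral_path hξm hξK hs).integrableOn
          hint_t.integrableOn fun ω => Real.exp_le_exp.2 (hmono ω)
    _ ≤ _ := by
        refine setIntegral_mono_set hint_t.integrableOn
          (ae_of_all _ fun ω => (Real.exp_pos _).le) (Filter.Eventually.of_forall ?_)
        rintro ω ⟨hincr, hpast⟩
        exact (sub_nonpos.1 hincr).trans hpast

end

namespace IsBrownianMotion

variable {P : ℝ → Measure 𝒲}

theorem indepFun_values_increment (hP : IsBrownianMotion P) (x : ℝ) {ts : ℕ → ℝ}
    (hts : Monotone ts) (h0 : ts 0 = 0) (n : ℕ) :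
    IndepFun (fun ω (k : Fin (n + 1)) => ω.1 (ts k)) (fun ω => ω.1 (ts (n + 1)) - ω.1 (ts n))
      (P x) := by
  have := hP.1 x
  have hD := hP.2.2.2 x (n + 1) ts hts h0.ge
  have h := (hD.indepFun_partialSum_last fun i =>
      (measurable_path_eval _).sub (measurable_path_eval _)).comp
    (measurable_pi_lambda _ fun k => (measurable_pi_apply k).const_add x) measurable_id
  refine h.congr ?_ (by simp)
  -- `ω (ts k) - x` telescopes into the increments before `k`, as `ω 0 = x` almost surely.
  filter_upwards [hP.2.1 x] with ω hω
  funext k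
  have htel :=
    Finset.sum_map (Finset.Iio k) Fin.valEmbedding fun j => ω.1 (ts (j + 1)) - ω.1 (ts j)
  rw [Fin.map_valEmbedding_Iio, Nat.Iio_eq_range, Finset.sum_range_sub (fun i => ω.1 (ts i)), h0,
    hω] at htel
  simp only [Function.comp_apply, Fin.valEmbedding_apply] at htel ⊢
  rw [← htel]
  ring

theorem indep_pathPast_increment (hP : IsBrownianMotion P) (x : ℝ) {s t : ℝ} (hs : 0 ≤ s)
    (hst : s ≤ t) :
    Indep (pathPast s) (MeasurableSpace.comap (fun ω : 𝒲 => ω.1 t - ω.1 s) inferInstance)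
      (P x) := by
  have := hP.1 x
  -- Each finite set of past times lies on a grid `0 = ts 0 ≤ … ≤ ts n = s ≤ ts (n + 1) = t`.
  rw [pathPast, iSup_eq_iSup_finset]
  refine indep_iSup_of_directed_le (fun F => ?_)
    (fun F => iSup₂_le fun r _ => (measurable_path_eval r).comap_le)
    ((measurable_path_eval t).sub (measurable_path_eval s)).comap_le
    (Monotone.directed_le fun F G hFG => biSup_mono hFG)
  obtain ⟨n, ts, hts, h0, hn, hn1, hgrid⟩ :=
    (F.map (Function.Embedding.subtype _)).exists_monotone_grid hs hst fun r hr => by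
      obtain ⟨r', -, rfl⟩ := Finset.mem_map.1 hr
      exact r'.2
  have h := hP.indepFun_values_increment x hts h0 n
  rw [hn, hn1] at h
  refine indep_of_indep_of_le_left h (iSup₂_le fun r hr => ?_)
  obtain ⟨k, hk, hkr⟩ := hgrid r.1 (Finset.mem_map_of_mem _ hr)
  have hr_eq : (fun ω : 𝒲 => ω.1 r) =
      (fun v : Fin (n + 1) → ℝ => v ⟨k, by omega⟩) ∘ fun ω k => ω.1 (ts k) := by
    funext ω
    simp [hkr]
  exact measurable_iff_comap_le.1 (hr_eq ▸ (measurable_pi_apply _).comp (comap_measurable _))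

theorem half_le_measureReal_increment_nonpos (hP : IsBrownianMotion P) (x : ℝ) {s t : ℝ}
    (hs : 0 ≤ s) (hst : s ≤ t) : 1 / 2 ≤ (P x).real {ω | ω.1 t - ω.1 s ≤ 0} := by
  have := hP.1 x
  have hX : Measurable fun ω : 𝒲 => ω.1 t - ω.1 s :=
    (measurable_path_eval t).sub (measurable_path_eval s)
  have hlaw := hP.2.2.1 x s t hs hst
  have hpre : {ω : 𝒲 | ω.1 t - ω.1 s ≤ 0} = (fun ω : 𝒲 => ω.1 t - ω.1 s) ⁻¹' Set.Iic 0 := rfl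
  rw [hpre, ← map_measureReal_apply hX measurableSet_Iic, hlaw]
  exact half_le_measureReal_Iic_zero (by rw [gaussianReal_map_neg, neg_zero])

theorem setIntegral_exp_mul_measureReal_eq {ξ : ℝ → ℝ} {K : ℝ} (hP : IsBrownianMotion P)
    (hξm : Measurable ξ) (hξK : ∀ z, ‖ξ z‖ ≤ K) (x : ℝ) {s t : ℝ} (hs : 0 ≤ s) (hst : s ≤ t) :
    (∫ ω in {ω : 𝒲 | ω.1 s ≤ 0}, Real.exp (∫ r in (0 : ℝ)..s, ξ (ω.1 r)) ∂P x) *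
        (P x).real {ω | ω.1 t - ω.1 s ≤ 0} =
      ∫ ω in {ω : 𝒲 | ω.1 t - ω.1 s ≤ 0} ∩ {ω | ω.1 s ≤ 0},
        Real.exp (∫ r in (0 : ℝ)..s, ξ (ω.1 r)) ∂P x := by
  have := hP.1 x
  have hA : MeasurableSet[pathPast s] {ω : 𝒲 | ω.1 s ≤ 0} :=
    measurableSet_le (measurable_pathPast_eval ⟨hs, le_rfl⟩) measurable_const
  have hB : MeasurableSet[MeasurableSpace.comap (fun ω : 𝒲 => ω.1 t - ω.1 s) inferInstance]
      {ω : 𝒲 | ω.1 t - ω.1 s ≤ 0} :=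
    ⟨Set.Iic 0, measurableSet_Iic, rfl⟩
  have hf : StronglyMeasurable[pathPast s]
      ({ω : 𝒲 | ω.1 s ≤ 0}.indicator fun ω => Real.exp (∫ r in (0 : ℝ)..s, ξ (ω.1 r))) :=
    ((Real.measurable_exp.comp (measurable_intervalIntegral_comp hs (fun ω => ω.2)
      (fun r hr => measurable_pathPast_eval hr) hξm)).indicator hA).stronglyMeasurable
  rw [← setIntegral_indicator (pathPast_le s _ hA),
    (hP.indep_pathPast_increment x hs hst).setIntegral_eq_measureReal_smul_integral
      (pathPast_le s) ((measurable_path_eval t).sub (measurable_path_eval s)).comap_le hf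
      ((integrable_exp_intervalIntegral_path hξm hξK hs).indicator (pathPast_le s _ hA)) hB,
    integral_indicator (pathPast_le s _ hA), smul_eq_mul, mul_comm]

end IsBrownianMotion

/-- monotonicity (up to a factor 2) in time of the Feynman–Kac
solution of the parabolic Anderson model with Heaviside initial condition. -/
theorem stmt11 (P : ℝ → Measure {f : ℝ → ℝ // Continuous f}) (hP : IsBrownianMotion P)
    (ξ : ℝ → ℝ) (hξm : Measurable ξ) (hξ0 : ∀ z, 0 ≤ ξ z)
    (K : ℝ) (hξK : ∀ z, ξ z ≤ K)
    (u : ℝ → ℝ → ℝ)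
    (hu : ∀ t x, u t x =
      ∫ ω in {ω : {f : ℝ → ℝ // Continuous f} | ω.1 t ≤ 0},
        Real.exp (∫ r in (0:ℝ)..t, ξ (ω.1 r)) ∂ P x) :
    ∀ x : ℝ, ∀ s t : ℝ, 0 ≤ s → s ≤ t → u s x ≤ 2 * u t x := by
  intro x s t hs hst
  have := hP.1 x
  have hus : 0 ≤ u s x := by
    rw [hu]
    exact integral_nonneg fun ω => (Real.exp_pos _).le
  have hξb : ∀ z, ‖ξ z‖ ≤ K := fun z => (Real.norm_of_nonneg (hξ0 z)).trans_le (hξK z)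
  have hhalf := hP.half_le_measureReal_increment_nonpos x hs hst
  have hmarkov : u s x * (P x).real {ω | ω.1 t - ω.1 s ≤ 0} ≤ u t x := by
    rw [hu, hu, hP.setIntegral_exp_mul_measureReal_eq hξm hξb x hs hst]
    exact setIntegral_exp_intervalIntegral_path_le hξm hξ0 hξb hs hst
  nlinarith
end
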